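/- Equip the polynomial ring B = k[t,t⁻¹][y] with the Poisson bracket {F,G} := (∂F/∂y)(∂G/∂t) − (∂F/∂t)(∂G/∂y). For γ ∈ k define p_γ: k[t,t⁻¹] → B by p_γ(f) = f·y + γ·f'. Then {p_γ(f), p_γ(g)} = p_γ(f·g' − f'·g) for all f, g ∈ k[t,t⁻¹]; that is, p_γ is a Lie algebra homomorphism from the Witt algebra into (B, {·,·}). -/

import Mathlib

/-! `f ↦ f'` is a derivation of `k[t,t⁻¹]`. Since `p_γ(f)` is linear in `y`, `∂_y p_γ(f) = f` and
`∂_t p_γ(f) = p_γ(f')`, so `{p_γ(f), p_γ(g)} = f·p_γ(g') − p_γ(f')·g`. Its `y`-coefficient is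
`fg' − f'g`, and its constant term `γ(fg'' − f''g)` is `γ` times the derivative of `fg' − f'g`. -/

/-- Formal derivative on Laurent polynomials, sending `tⁿ` to `n·tⁿ⁻¹`. -/
noncomputable def lderiv {k : Type*} [CommRing k] (f : LaurentPolynomial k) : LaurentPolynomial k :=
  AddMonoidAlgebra.ofCoeff (Finsupp.sum f.coeff fun n a => Finsupp.single (n - 1) ((n : k) * a))

/-- Partial derivative `∂/∂t` on `B = k[t,t⁻¹][y]`, acting on coefficients. -/
noncomputable def pderivT {k : Type*} [CommRing k] (F : Polynomial (LaurentPolynomial k)) :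
    Polynomial (LaurentPolynomial k) :=
  F.sum fun i a => Polynomial.C (lderiv a) * Polynomial.X ^ i

/-- The Poisson bracket `{F,G} = (∂F/∂y)(∂G/∂t) − (∂F/∂t)(∂G/∂y)` on `B = k[t,t⁻¹][y]`. -/
noncomputable def poissonB {k : Type*} [CommRing k]
    (F G : Polynomial (LaurentPolynomial k)) : Polynomial (LaurentPolynomial k) :=
  Polynomial.derivative F * pderivT G - pderivT F * Polynomial.derivative G

/-- The map `p_γ : f ↦ f·y + γ·f'` from `k[t,t⁻¹]` to `B = k[t,t⁻¹][y]`. -/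
noncomputable def pGamma {k : Type*} [CommRing k] (γ : k) (f : LaurentPolynomial k) :
    Polynomial (LaurentPolynomial k) :=
  Polynomial.C f * Polynomial.X + Polynomial.C (LaurentPolynomial.C γ * lderiv f)

section LaurentDerivative

variable {k : Type*} [CommRing k]

open AddMonoidAlgebra

lemma lderiv_zero : lderiv (0 : LaurentPolynomial k) = 0 := by
  simp [lderiv]

lemma lderiv_single (n : ℤ) (a : k) :
    lderiv (single n a : LaurentPolynomial k) = single (n - 1) ((n : k) * a) := by
  rw [lderiv, coeff_single, Finsupp.sum_single_index (by simp), ofCoeff_single]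

lemma lderiv_add (f g : LaurentPolynomial k) : lderiv (f + g) = lderiv f + lderiv g := by
  rw [lderiv, coeff_add, Finsupp.sum_add_index (by simp) (by simp [mul_add]), ofCoeff_add]
  rfl

lemma lderiv_sub (f g : LaurentPolynomial k) : lderiv (f - g) = lderiv f - lderiv g :=
  map_sub (AddMonoidHom.mk' lderiv lderiv_add) f g

lemma lderiv_mul (f g : LaurentPolynomial k) :
    lderiv (f * g) = lderiv f * g + f * lderiv g := by
  induction f using induction_linear with
  | zero => rw [zero_mul, lderiv_zero, zero_mul, zero_mul, add_zero]
  | add f₁ f₂ h₁ h₂ => simp only [add_mul, lderiv_add, h₁, h₂]; ring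
  | single m a =>
    induction g using induction_linear with
    | zero => rw [mul_zero, lderiv_zero, mul_zero, mul_zero, add_zero]
    | add g₁ g₂ h₁ h₂ => simp only [mul_add, lderiv_add, h₁, h₂]; ring
    | single n b =>
      rw [single_mul_single, lderiv_single, lderiv_single, lderiv_single, single_mul_single,
        single_mul_single, sub_add_eq_add_sub, add_sub_assoc, ← single_add]
      congr 1
      push_cast
      ring

lemma lderiv_C_mul (γ : k) (f : LaurentPolynomial k) :
    lderiv (LaurentPolynomial.C γ * f) = LaurentPolynomial.C γ * lderiv f := by
  have hC : lderiv (LaurentPolynomial.C γ) = 0 := by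
    change lderiv (single 0 γ : LaurentPolynomial k) = 0
    rw [lderiv_single, Int.cast_zero, zero_mul, single_zero]
  rw [lderiv_mul, hC, zero_mul, zero_add]

lemma lderiv_mul_lderiv_sub (f g : LaurentPolynomial k) :
    lderiv (f * lderiv g - lderiv f * g) = f * lderiv (lderiv g) - lderiv (lderiv f) * g := by
  rw [lderiv_sub, lderiv_mul, lderiv_mul]
  ring

end LaurentDerivative

section PartialDerivative

variable {k : Type*} [CommRing k]

open Polynomial

lemma pderivT_add (F G : (LaurentPolynomial k)[X]) : pderivT (F + G) = pderivT F + pderivT G := by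
  refine sum_add_index _ _ _ (fun _ => by simp [lderiv_zero]) fun _ _ _ => ?_
  rw [lderiv_add, C_add, add_mul]

lemma pderivT_monomial (n : ℕ) (a : LaurentPolynomial k) :
    pderivT (monomial n a) = C (lderiv a) * X ^ n := by
  rw [pderivT, sum_monomial_index]
  simp [lderiv_zero]

lemma pderivT_pGamma (γ : k) (f : LaurentPolynomial k) :
    pderivT (pGamma γ f) = pGamma γ (lderiv f) := by
  rw [pGamma, pGamma, C_mul_X_eq_monomial, ← monomial_zero_left, pderivT_add, pderivT_monomial,
    pderivT_monomial, lderiv_C_mul, pow_one, pow_zero, mul_one]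

lemma derivative_pGamma (γ : k) (f : LaurentPolynomial k) : derivative (pGamma γ f) = C f := by
  simp [pGamma]

end PartialDerivative

theorem pGamma_poisson_hom_general {k : Type*} [Field k] (γ : k)
    (f g : LaurentPolynomial k) :
    poissonB (pGamma γ f) (pGamma γ g) = pGamma γ (f * lderiv g - lderiv f * g) := by
  rw [poissonB, derivative_pGamma, derivative_pGamma, pderivT_pGamma, pderivT_pGamma, pGamma,
    pGamma, pGamma, lderiv_mul_lderiv_sub]
  simp only [map_sub, map_mul]
  ring

/-- With the Poisson bracket `{F,G} = (∂F/∂y)(∂G/∂t) − (∂F/∂t)(∂G/∂y)` on `B = k[t,t⁻¹][y]`,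
the map `p_γ(f) = f·y + γ·f'` satisfies `{p_γ(f), p_γ(g)} = p_γ(fg' − f'g)`; that is, `p_γ` is
a Lie algebra homomorphism from the Witt algebra into `(B, {·,·})`. -/
theorem pGamma_poisson_hom {k : Type*} [Field k] [CharZero k] (γ : k)
    (f g : LaurentPolynomial k) :
    poissonB (pGamma γ f) (pGamma γ g) = pGamma γ (f * lderiv g - lderiv f * g) :=
  pGamma_poisson_hom_general γ f g
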